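/- For every subset S of the quaternion group Q_8, the Haar graph H(Q_8, S) is a Cayley graph. -/

import Mathlib

/-- The Haar graph of a group `H` with connection set `S ⊆ H`: the bipartite
graph on two copies of `H` (indexed by `Bool`; `false` is the copy `H₀`,
`true` is the copy `H₁`) in which `h₀` is adjacent to `(s*h)₁` for `s ∈ S`. -/
def haarGraph {H : Type*} [Group H] (S : Set H) : SimpleGraph (Bool × H) where
  Adj u v := (u.1 = false ∧ v.1 = true ∧ v.2 * u.2⁻¹ ∈ S) ∨
             (u.1 = true ∧ v.1 = false ∧ u.2 * v.2⁻¹ ∈ S)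
  symm := by
    constructor
    rintro ⟨i, x⟩ ⟨j, y⟩ (⟨h1, h2, h3⟩ | ⟨h1, h2, h3⟩)
    · exact Or.inr ⟨h2, h1, h3⟩
    · exact Or.inl ⟨h2, h1, h3⟩
  loopless := by
    constructor
    rintro ⟨i, x⟩ (⟨h1, h2, _⟩ | ⟨h1, h2, _⟩) <;> simp_all

/-- A graph is a Cayley graph if its automorphism group contains a subgroup
acting regularly on the vertex set. -/
def IsCayleyGraph {V : Type*} (Γ : SimpleGraph V) : Prop :=
  ∃ G : Subgroup (Equiv.Perm V),
    (∀ g ∈ G, ∀ u v : V, Γ.Adj (g u) (g v) ↔ Γ.Adj u v) ∧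
    (∀ u v : V, ∃! g : Equiv.Perm V, g ∈ G ∧ g u = v)

/-- A graph is vertex-transitive if its automorphism group acts transitively
on the vertices. -/
def IsVertexTransitive {V : Type*} (Γ : SimpleGraph V) : Prop :=
  ∀ u v : V, ∃ f : Γ ≃g Γ, f u = v

/-- A group is inner abelian if it is non-abelian but every proper subgroup
is abelian. -/
def IsInnerAbelian (H : Type*) [Group H] : Prop :=
  (¬ ∀ a b : H, a * b = b * a) ∧
    ∀ K : Subgroup H, K ≠ ⊤ → ∀ a b : H, a ∈ K → b ∈ K → a * b = b * a

/-! The right translations `(i, x) ↦ (i, x g⁻¹)` are automorphisms of every Haar graph `H(H, S)`.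
Given an automorphism `θ` of `H` and `b ∈ H` with `θ b = b` and `θ (θ x) = b⁻¹ x b`, the map
`x₀ ↦ (θ x)₁, y₁ ↦ (b θ y)₀` normalises the right translations and squares to one of them, so
together they form a group of order `2|H|` acting regularly on the vertices. This map is a graph
automorphism as soon as `S` is invariant under `u ↦ θ(u⁻¹) b⁻¹`.

For `Q₈ = QuaternionGroup 2` (where `a 2 = -1`, `a 1 = i`, `xa 0 = j`) one of three choices
works: `θ = id, b = -1` if `S` contains both or neither of `±1`; `θ` = conjugation by `g`, `b = 1`
if `S` contains both or neither of `±g` for some `g` of order 4; otherwise `S` contains exactly one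
element of each pair `±x`, and an outer automorphism exchanging `i` with `±j` does the job. -/

theorem isCayleyGraph_of_transitive_of_free {V : Type*} (Γ : SimpleGraph V)
    (G : Subgroup (Equiv.Perm V)) (hadj : ∀ g ∈ G, ∀ u v, Γ.Adj (g u) (g v) ↔ Γ.Adj u v) (v₀ : V)
    (htrans : ∀ v, ∃ g ∈ G, g v₀ = v) (hfree : ∀ g ∈ G, ∀ v, g v = v → g = 1) :
    IsCayleyGraph Γ := by
  refine ⟨G, hadj, fun u v => ?_⟩
  obtain ⟨gu, hgu, rfl⟩ := htrans u
  obtain ⟨gv, hgv, rfl⟩ := htrans v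
  refine ⟨gv * gu⁻¹, ⟨G.mul_mem hgv (G.inv_mem hgu), by simp⟩, fun g ⟨hg, hgv'⟩ => ?_⟩
  have hfix : gv⁻¹ * g * gu = 1 :=
    hfree _ (G.mul_mem (G.mul_mem (G.inv_mem hgv) hg) hgu) v₀ (by simp [hgv'])
  calc g = gv * (gv⁻¹ * g * gu) * gu⁻¹ := by group
    _ = gv * gu⁻¹ := by rw [hfix, mul_one]

lemma mem_iff_swap_apply_mem {α : Type*} [DecidableEq α] {S : Set α} {p q : α}
    (h : p ∈ S ↔ q ∈ S) (u : α) : u ∈ S ↔ Equiv.swap p q u ∈ S := by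
  rw [Equiv.swap_apply_def]
  split_ifs with hp hq
  · exact hp ▸ h
  · exact hq ▸ h.symm
  · rfl

section

variable {H : Type*} [Group H]

@[simp] lemma haarGraph_adj_false_true (S : Set H) (x y : H) :
    (haarGraph S).Adj (false, x) (true, y) ↔ y * x⁻¹ ∈ S := by
  simp [haarGraph]

@[simp] lemma haarGraph_adj_true_false (S : Set H) (x y : H) :
    (haarGraph S).Adj (true, y) (false, x) ↔ y * x⁻¹ ∈ S := by
  simp [haarGraph]

@[simp] lemma haarGraph_not_adj_same (S : Set H) (i : Bool) (x y : H) :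
    ¬ (haarGraph S).Adj (i, x) (i, y) := by
  cases i <;> simp [haarGraph]

namespace HaarGraph

def rightMul : H →* Equiv.Perm (Bool × H) where
  toFun g := Equiv.prodCongrRight fun _ => Equiv.mulRight g⁻¹
  map_one' := by ext <;> simp
  map_mul' g h := by ext <;> simp [mul_assoc]

@[simp] lemma rightMul_apply (g : H) (v : Bool × H) : rightMul g v = (v.1, v.2 * g⁻¹) := rfl

lemma rightMul_adj (S : Set H) (g : H) (u v : Bool × H) :
    (haarGraph S).Adj (rightMul g u) (rightMul g v) ↔ (haarGraph S).Adj u v := by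
  rcases u with ⟨_ | _, x⟩ <;> rcases v with ⟨_ | _, y⟩ <;> simp [mul_assoc]

def twist (θ : H ≃* H) (b : H) : Equiv.Perm (Bool × H) where
  toFun
    | (false, x) => (true, θ x)
    | (true, y) => (false, b * θ y)
  invFun
    | (false, z) => (true, θ.symm (b⁻¹ * z))
    | (true, y) => (false, θ.symm y)
  left_inv := by rintro ⟨_ | _, x⟩ <;> simp
  right_inv := by rintro ⟨_ | _, x⟩ <;> simp

variable (θ : H ≃* H) (b : H)

@[simp] lemma twist_false (x : H) : twist θ b (false, x) = (true, θ x) := rfl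
@[simp] lemma twist_true (y : H) : twist θ b (true, y) = (false, b * θ y) := rfl

lemma twist_mul_rightMul (g : H) : twist θ b * rightMul g = rightMul (θ g) * twist θ b := by
  ext ⟨_ | _, x⟩ <;> simp [mul_assoc]

lemma twist_mul_twist (hb : θ b = b) (hθ : ∀ x, θ (θ x) = b⁻¹ * x * b) :
    twist θ b * twist θ b = rightMul b⁻¹ := by
  ext ⟨_ | _, x⟩ <;> simp [-map_inv, hb, hθ, mul_assoc]

lemma twist_adj (S : Set H) (hS : ∀ u, u ∈ S ↔ θ u⁻¹ * b⁻¹ ∈ S) (u v : Bool × H) :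
    (haarGraph S).Adj (twist θ b u) (twist θ b v) ↔ (haarGraph S).Adj u v := by
  have key (x y : H) : θ x * (b * θ y)⁻¹ ∈ S ↔ y * x⁻¹ ∈ S := by
    rw [hS (y * x⁻¹)]
    simp [mul_assoc]
  rcases u with ⟨_ | _, x⟩ <;> rcases v with ⟨_ | _, y⟩ <;>
    simp only [twist_false, twist_true, haarGraph_adj_false_true, haarGraph_adj_true_false,
      haarGraph_not_adj_same, key]

variable {θ b}

def twistSubgroup (hb : θ b = b) (hθ : ∀ x, θ (θ x) = b⁻¹ * x * b) :
    Subgroup (Equiv.Perm (Bool × H)) where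
  carrier := {π | ∃ g, π = rightMul g ∨ π = rightMul g * twist θ b}
  one_mem' := ⟨1, Or.inl (map_one _).symm⟩
  mul_mem' := by
    rintro _ _ ⟨g, rfl | rfl⟩ ⟨h, rfl | rfl⟩
    · exact ⟨g * h, Or.inl (map_mul _ _ _).symm⟩
    · exact ⟨g * h, Or.inr (by rw [map_mul, mul_assoc])⟩
    · exact ⟨g * θ h, Or.inr (by rw [mul_assoc, twist_mul_rightMul, map_mul, mul_assoc])⟩
    · refine ⟨g * θ h * b⁻¹, Or.inl ?_⟩
      rw [mul_assoc, ← mul_assoc (twist θ b), twist_mul_rightMul, mul_assoc, mul_assoc,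
        twist_mul_twist θ b hb hθ, map_mul, map_mul]
  inv_mem' := by
    rintro _ ⟨g, rfl | rfl⟩
    · exact ⟨g⁻¹, Or.inl (map_inv _ _).symm⟩
    · refine ⟨θ.symm (g⁻¹ * b), Or.inr (inv_eq_of_mul_eq_one_right ?_)⟩
      rw [mul_assoc, ← mul_assoc (twist θ b), twist_mul_rightMul, mul_assoc,
        twist_mul_twist θ b hb hθ, MulEquiv.apply_symm_apply, ← map_mul, ← map_mul]
      simp

end HaarGraph

open HaarGraph in
theorem isCayleyGraph_haarGraph_of_twist (S : Set H) (θ : H ≃* H) (b : H) (hb : θ b = b)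
    (hθ : ∀ x, θ (θ x) = b⁻¹ * x * b) (hS : ∀ u, u ∈ S ↔ θ u⁻¹ * b⁻¹ ∈ S) :
    IsCayleyGraph (haarGraph S) := by
  refine isCayleyGraph_of_transitive_of_free _ (twistSubgroup hb hθ) ?_ (false, 1) ?_ ?_
  · rintro _ ⟨g, rfl | rfl⟩ u v
    · exact rightMul_adj S g u v
    · simp only [Equiv.Perm.mul_apply, rightMul_adj, twist_adj θ b S hS]
  · rintro ⟨_ | _, y⟩
    · exact ⟨rightMul y⁻¹, ⟨_, Or.inl rfl⟩, by simp [-map_inv]⟩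
    · exact ⟨rightMul y⁻¹ * twist θ b, ⟨_, Or.inr rfl⟩, by simp [-map_inv]⟩
  · rintro _ ⟨g, rfl | rfl⟩ ⟨_ | _, x⟩ h <;> simp_all [-map_inv]

theorem isCayleyGraph_haarGraph_of_mem_center (S : Set H) {b : H} (hb : b ∈ Subgroup.center H)
    (hS : ∀ u, u ∈ S ↔ u⁻¹ * b⁻¹ ∈ S) : IsCayleyGraph (haarGraph S) :=
  isCayleyGraph_haarGraph_of_twist S (MulEquiv.refl H) b rfl
    (fun x => by
      rw [MulEquiv.refl_apply, MulEquiv.refl_apply, mul_assoc, Subgroup.mem_center_iff.mp hb x,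
        inv_mul_cancel_left])
    hS

theorem isCayleyGraph_haarGraph_of_conj (S : Set H) {g : H} (hg : g ^ 2 ∈ Subgroup.center H)
    (hS : ∀ u, u ∈ S ↔ g * u⁻¹ * g⁻¹ ∈ S) : IsCayleyGraph (haarGraph S) := by
  refine isCayleyGraph_haarGraph_of_twist S (MulAut.conj g) 1 (map_one _) (fun x => ?_)
    (by simpa using hS)
  calc MulAut.conj g (MulAut.conj g x)
      _ = g ^ 2 * x * (g ^ 2)⁻¹ := by simp only [MulAut.conj_apply, sq]; group
      _ = 1⁻¹ * x * 1 := by rw [← Subgroup.mem_center_iff.mp hg x]; group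

end

namespace QuaternionGroup

open Equiv

lemma a_two_mem_center : (a 2 : QuaternionGroup 2) ∈ Subgroup.center (QuaternionGroup 2) := by
  rw [Subgroup.mem_center_iff]
  decide

lemma inv_mul_inv_a_two (u : QuaternionGroup 2) : u⁻¹ * (a 2)⁻¹ = swap (a 0) (a 2) u := by
  revert u
  decide

lemma mul_inv_mul_inv_of_sq_eq_a_two {g : QuaternionGroup 2} (hg : g ^ 2 = a 2)
    (u : QuaternionGroup 2) : g * u⁻¹ * g⁻¹ = swap g g⁻¹ u := by
  revert g u
  decide

/-- The automorphism exchanging `i` with `c⁻¹`, for `c = ±j`. It is written as `x ↦ σ x⁻¹` for a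
product `σ` of two transpositions, so that `u ↦ θ u⁻¹` is just `σ`. -/
def outerAut (c : QuaternionGroup 2) (hc : c = xa 0 ∨ c = (xa 0)⁻¹) :
    QuaternionGroup 2 ≃* QuaternionGroup 2 :=
  MulEquiv.mk' ((Equiv.inv _).trans (swap (a 1) c * swap (a 1)⁻¹ c⁻¹)) (by
    rcases hc with rfl | rfl <;> decide)

lemma outerAut_apply (c : QuaternionGroup 2) (hc : c = xa 0 ∨ c = (xa 0)⁻¹)
    (x : QuaternionGroup 2) :
    outerAut c hc x = swap (a 1) c (swap (a 1)⁻¹ c⁻¹ x⁻¹) :=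
  rfl

lemma outerAut_outerAut (c : QuaternionGroup 2) (hc : c = xa 0 ∨ c = (xa 0)⁻¹)
    (x : QuaternionGroup 2) :
    outerAut c hc (outerAut c hc x) = x := by
  revert x
  rcases hc with rfl | rfl <;> decide

theorem isCayleyGraph_haarGraph_of_outerAut (S : Set (QuaternionGroup 2)) (c : QuaternionGroup 2)
    (hc : c = xa 0 ∨ c = (xa 0)⁻¹) (h₁ : a 1 ∈ S ↔ c ∈ S) (h₃ : (a 1)⁻¹ ∈ S ↔ c⁻¹ ∈ S) :
    IsCayleyGraph (haarGraph S) := by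
  refine isCayleyGraph_haarGraph_of_twist S (outerAut c hc) 1 (map_one _)
    (fun x => by rw [outerAut_outerAut]; group) fun u => ?_
  rw [outerAut_apply, inv_inv, inv_one, mul_one]
  exact (mem_iff_swap_apply_mem h₃ u).trans (mem_iff_swap_apply_mem h₁ _)

end QuaternionGroup

open QuaternionGroup in
theorem quaternion_haar_graphs_are_cayley
    (S : Set (QuaternionGroup 2)) :
    IsCayleyGraph (haarGraph S) := by
  by_cases h₀ : a 0 ∈ S ↔ a 2 ∈ S
  · exact isCayleyGraph_haarGraph_of_mem_center S a_two_mem_center fun u => by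
      rw [inv_mul_inv_a_two]
      exact mem_iff_swap_apply_mem h₀ u
  by_cases hsq : ∃ g : QuaternionGroup 2, g ^ 2 = a 2 ∧ (g ∈ S ↔ g⁻¹ ∈ S)
  · obtain ⟨g, hg, hgS⟩ := hsq
    exact isCayleyGraph_haarGraph_of_conj S (hg ▸ a_two_mem_center) fun u => by
      rw [mul_inv_mul_inv_of_sq_eq_a_two hg]
      exact mem_iff_swap_apply_mem hgS u
  push Not at hsq
  have hi := hsq (a 1) (by decide)
  have hj := hsq (xa 0) (by decide)
  by_cases h : a 1 ∈ S ↔ xa 0 ∈ S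
  · exact isCayleyGraph_haarGraph_of_outerAut S (xa 0) (.inl rfl) h (by tauto)
  · exact isCayleyGraph_haarGraph_of_outerAut S (xa 0)⁻¹ (.inr rfl) (by tauto)
      (by rw [inv_inv]; tauto)
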